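/- Define Φ : ℝ³ \ {0} → ℝ by Φ(x,y,t) = ((x²+y²)² + t²)^{−1/2}. Then Φ is Δ_H-harmonic away from the origin, i.e. Δ_H Φ(v) = 0 for every v ≠ 0, and Φ is homogeneous of degree −2 with respect to the Heisenberg dilations: Φ(r x, r y, r² t) = r^{−2} Φ(x,y,t) for every r > 0 and every (x,y,t) ≠ 0. -/

import Mathlib

noncomputable section

/-- The Korányi norm ρ(x,y,t) = ((x²+y²)² + t²)^{1/4} on ℝ³ (coordinates v 0 = x,
v 1 = y, v 2 = t). -/
def rho3 (v : Fin 3 → ℝ) : ℝ := ((v 0 ^ 2 + v 1 ^ 2) ^ 2 + v 2 ^ 2) ^ ((1 : ℝ) / 4)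

/-- The horizontal derivative X u(v) = ∂ₓ u(v) + 2y ∂ₜ u(v). -/
def Xd (u : (Fin 3 → ℝ) → ℝ) (v : Fin 3 → ℝ) : ℝ :=
  fderiv ℝ u v (Pi.single 0 1) + 2 * v 1 * fderiv ℝ u v (Pi.single 2 1)

/-- The horizontal derivative Y u(v) = ∂_y u(v) − 2x ∂ₜ u(v). -/
def Yd (u : (Fin 3 → ℝ) → ℝ) (v : Fin 3 → ℝ) : ℝ :=
  fderiv ℝ u v (Pi.single 1 1) - 2 * v 0 * fderiv ℝ u v (Pi.single 2 1)

/-- The sub-Laplacian Δ_H u = X(X u) + Y(Y u). -/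
def DeltaHd (u : (Fin 3 → ℝ) → ℝ) (v : Fin 3 → ℝ) : ℝ := Xd (Xd u) v + Yd (Yd u) v

/-- Folland's fundamental solution (up to a constant): Φ(x,y,t) = ((x²+y²)² + t²)^{−1/2}. -/
def Phi (v : Fin 3 → ℝ) : ℝ := ((v 0 ^ 2 + v 1 ^ 2) ^ 2 + v 2 ^ 2) ^ (-(1 : ℝ) / 2)

/-! Write Φ = q^{-1/2} with q = (x² + y²)² + t². Since X and Y are derivations, the
sub-Laplacian obeys the chain rule Δ_H(q^p) = p(p-1) q^{p-2} ((Xq)² + (Yq)²) + p q^{p-1} Δ_H q. Here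
Xq = 4(x(x² + y²) + yt) and Yq = 4(y(x² + y²) - xt), so (Xq)² + (Yq)² = 16(x² + y²) q, while
Δ_H q = 24(x² + y²); for p = -1/2 the two terms are 12(x² + y²) q^{-3/2} and its negative.
Homogeneity comes from q(rx, ry, r²t) = r⁴ q(x, y, t). -/

open Filter Topology

section derivAlong

variable {E : Type*} [NormedAddCommGroup E] [NormedSpace ℝ E]

def derivAlong (e : E → E) (u : E → ℝ) (v : E) : ℝ := fderiv ℝ u v (e v)

variable {e : E → E} {u : E → ℝ} {v : E}

theorem derivAlong_congr_of_eventuallyEq {w : E → ℝ} (h : u =ᶠ[𝓝 v] w) :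
    derivAlong e u v = derivAlong e w v := by
  rw [derivAlong, derivAlong, h.fderiv_eq]

theorem derivAlong_rpow_const (hu : DifferentiableAt ℝ u v) (hv : u v ≠ 0) (p : ℝ) :
    derivAlong e (fun w => u w ^ p) v = p * u v ^ (p - 1) * derivAlong e u v := by
  rw [derivAlong, (hu.hasFDerivAt.rpow_const (Or.inl hv)).fderiv, derivAlong]
  simp only [smul_apply, smul_eq_mul]

theorem derivAlong_derivAlong_rpow_const (hu : ContDiff ℝ 2 u) (he : DifferentiableAt ℝ e v)
    (hv : u v ≠ 0) (p : ℝ) :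
    derivAlong e (derivAlong e (fun w => u w ^ p)) v =
      p * (p - 1) * u v ^ (p - 2) * derivAlong e u v ^ 2 +
        p * u v ^ (p - 1) * derivAlong e (derivAlong e u) v := by
  have hdiff : Differentiable ℝ u := hu.differentiable two_ne_zero
  have hfirst : derivAlong e (fun w => u w ^ p) =ᶠ[𝓝 v]
      fun w => p * u w ^ (p - 1) * derivAlong e u w :=
    (hu.continuous.continuousAt.eventually_ne hv).mono fun w hw =>
      derivAlong_rpow_const (hdiff w) hw p
  have hpow : HasFDerivAt (fun w => u w ^ (p - 1))
      (((p - 1) * u v ^ (p - 2)) • fderiv ℝ u v) v := by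
    rw [show p - 2 = p - 1 - 1 by ring]
    exact (hdiff v).hasFDerivAt.rpow_const (Or.inl hv)
  have hD : DifferentiableAt ℝ (derivAlong e u) v :=
    ((hu.fderiv_right (m := 1) le_rfl).differentiable one_ne_zero v).clm_apply he
  rw [derivAlong_congr_of_eventuallyEq hfirst, derivAlong,
    ((hpow.const_mul p).fun_mul hD.hasFDerivAt).fderiv]
  simp only [derivAlong, add_apply, smul_apply, smul_eq_mul]
  ring

end derivAlong

def xField (v : Fin 3 → ℝ) : Fin 3 → ℝ := ![1, 0, 2 * v 1]

def yField (v : Fin 3 → ℝ) : Fin 3 → ℝ := ![0, 1, -(2 * v 0)]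

theorem Xd_eq_derivAlong : Xd = derivAlong xField := by
  ext u v
  have hX : xField v = Pi.single 0 1 + (2 * v 1) • Pi.single 2 1 := by
    ext i; fin_cases i <;> simp [xField]
  rw [derivAlong, hX, map_add, map_smul, smul_eq_mul, Xd]

theorem Yd_eq_derivAlong : Yd = derivAlong yField := by
  ext u v
  have hY : yField v = Pi.single 1 1 - (2 * v 0) • Pi.single 2 1 := by
    ext i; fin_cases i <;> simp [yField]
  rw [derivAlong, hY, map_sub, map_smul, smul_eq_mul, Yd]

theorem DeltaHd_rpow_const {u : (Fin 3 → ℝ) → ℝ} {v : Fin 3 → ℝ} (hu : ContDiff ℝ 2 u)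
    (hv : u v ≠ 0) (p : ℝ) :
    DeltaHd (fun w => u w ^ p) v =
      p * (p - 1) * u v ^ (p - 2) * (Xd u v ^ 2 + Yd u v ^ 2) +
        p * u v ^ (p - 1) * DeltaHd u v := by
  have hX : DifferentiableAt ℝ xField v :=
    differentiableAt_pi.2 fun i => by fin_cases i <;> simp [xField]; fun_prop
  have hY : DifferentiableAt ℝ yField v :=
    differentiableAt_pi.2 fun i => by fin_cases i <;> simp [yField]; fun_prop
  simp only [DeltaHd, Xd_eq_derivAlong, Yd_eq_derivAlong,
    derivAlong_derivAlong_rpow_const hu hX hv, derivAlong_derivAlong_rpow_const hu hY hv]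
  ring

def koranyiQuartic (v : Fin 3 → ℝ) : ℝ := (v 0 ^ 2 + v 1 ^ 2) ^ 2 + v 2 ^ 2

theorem koranyiQuartic_pos {v : Fin 3 → ℝ} (hv : v ≠ 0) : 0 < koranyiQuartic v := by
  have hcoord : v 0 ≠ 0 ∨ v 1 ≠ 0 ∨ v 2 ≠ 0 := by
    by_contra! h
    exact hv (funext fun i => by fin_cases i <;> simp [h.1, h.2.1, h.2.2])
  unfold koranyiQuartic
  rcases hcoord with h | h | h <;> positivity

theorem contDiff_koranyiQuartic : ContDiff ℝ 2 koranyiQuartic := by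
  unfold koranyiQuartic; fun_prop

theorem Xd_koranyiQuartic :
    Xd koranyiQuartic = fun v => 4 * (v 0 * (v 0 ^ 2 + v 1 ^ 2) + v 1 * v 2) := by
  ext v
  unfold koranyiQuartic
  simp (disch := fun_prop) [Xd_eq_derivAlong, derivAlong, xField, fderiv_fun_add,
    fderiv_fun_pow, fderiv_apply]
  ring

theorem Yd_koranyiQuartic :
    Yd koranyiQuartic = fun v => 4 * (v 1 * (v 0 ^ 2 + v 1 ^ 2) - v 0 * v 2) := by
  ext v
  unfold koranyiQuartic
  simp (disch := fun_prop) [Yd_eq_derivAlong, derivAlong, yField, fderiv_fun_add,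
    fderiv_fun_pow, fderiv_apply]
  ring

theorem Xd_koranyiQuartic_sq_add_Yd_koranyiQuartic_sq (v : Fin 3 → ℝ) :
    Xd koranyiQuartic v ^ 2 + Yd koranyiQuartic v ^ 2 =
      16 * (v 0 ^ 2 + v 1 ^ 2) * koranyiQuartic v := by
  rw [Xd_koranyiQuartic, Yd_koranyiQuartic, koranyiQuartic]
  ring

theorem DeltaHd_koranyiQuartic (v : Fin 3 → ℝ) :
    DeltaHd koranyiQuartic v = 24 * (v 0 ^ 2 + v 1 ^ 2) := by
  rw [DeltaHd, Xd_koranyiQuartic, Yd_koranyiQuartic]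
  simp (disch := fun_prop) [Xd_eq_derivAlong, Yd_eq_derivAlong, derivAlong, xField, yField,
    fderiv_fun_add, fderiv_fun_sub, fderiv_fun_mul, fderiv_fun_pow, fderiv_apply]
  ring

theorem DeltaHd_Phi {v : Fin 3 → ℝ} (hv : v ≠ 0) : DeltaHd Phi v = 0 := by
  have hq := koranyiQuartic_pos hv
  have hPhi : Phi = fun w => koranyiQuartic w ^ (-(1 : ℝ) / 2) := rfl
  rw [hPhi, DeltaHd_rpow_const contDiff_koranyiQuartic hq.ne',
    Xd_koranyiQuartic_sq_add_Yd_koranyiQuartic_sq, DeltaHd_koranyiQuartic,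
    show -(1 : ℝ) / 2 - 2 = -(1 : ℝ) / 2 - 1 - 1 by norm_num, Real.rpow_sub_one hq.ne']
  field_simp
  ring

theorem Phi_dilation {r : ℝ} (hr : 0 < r) (v : Fin 3 → ℝ) :
    Phi ![r * v 0, r * v 1, r ^ 2 * v 2] = r ^ (-2 : ℤ) * Phi v := by
  have hscale : ((r * v 0) ^ 2 + (r * v 1) ^ 2) ^ 2 + (r ^ 2 * v 2) ^ 2 =
      r ^ 4 * ((v 0 ^ 2 + v 1 ^ 2) ^ 2 + v 2 ^ 2) := by ring
  simp only [Phi, Matrix.cons_val_zero, Matrix.cons_val_one, Matrix.cons_val_two,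
    Matrix.head_cons, Matrix.tail_cons]
  rw [hscale, Real.mul_rpow (by positivity) (by positivity), ← Real.rpow_natCast,
    ← Real.rpow_mul hr.le, ← Real.rpow_intCast]
  norm_num

/-- Φ is Δ_H-harmonic away from the origin and homogeneous of degree −2
with respect to the Heisenberg dilations δ_r(x,y,t) = (rx, ry, r²t). -/
theorem stmt17 :
    (∀ v : Fin 3 → ℝ, v ≠ 0 → DeltaHd Phi v = 0) ∧
    (∀ r : ℝ, 0 < r → ∀ v : Fin 3 → ℝ, v ≠ 0 →
      Phi ![r * v 0, r * v 1, r ^ 2 * v 2] = r ^ (-2 : ℤ) * Phi v) :=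
  ⟨fun _ hv => DeltaHd_Phi hv, fun _ hr v _ => Phi_dilation hr v⟩

end
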